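/- arXiv:2408.09896 — 2 statements merged into one kernel-verified Lean document; each statement's English description precedes it below -/
import Mathlib

section
/- If the denoising network φ is permutation equivariant (φ(π.G) = π.φ(G)) and the forward posterior q satisfies q(π.G' | π.G'', π.Ĝ) = q(G' | G'', Ĝ), then the x₀-parameterized reverse kernel p_θ(G_{t-1}|G_t) := Σ_Ĝ q(G_{t-1} | G_t, Ĝ) [φ(G_t) = Ĝ-probabilities] is permutation equivariant: p_θ(π.G_{t-1} | π.G_t) = p_θ(G_{t-1} | G_t). -/
/-- If the denoising network output p̂ is permutation equivariant,
p̂_{π.G_t}(π.Ĝ) = p̂_{G_t}(Ĝ), and the forward posterior q satisfies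
q(π.G' | π.G'', π.Ĝ) = q(G' | G'', Ĝ), then the x₀-parameterized reverse
kernel p_θ(G_{t-1}|G_t) = Σ_Ĝ q(G_{t-1}|G_t,Ĝ) p̂_{G_t}(Ĝ) is permutation
equivariant. -/
theorem x0_param_kernel_equivariant (Γ : Type*) [Fintype Γ] (m : ℕ)
    [MulAction (Equiv.Perm (Fin m)) Γ]
    (phat : Γ → Γ → ℝ) (q : Γ → Γ → Γ → ℝ)
    (hphat : ∀ (π : Equiv.Perm (Fin m)) (Gt Ghat : Γ),
      phat (π • Gt) (π • Ghat) = phat Gt Ghat)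
    (hq : ∀ (π : Equiv.Perm (Fin m)) (G' G'' Ghat : Γ),
      q (π • G') (π • G'') (π • Ghat) = q G' G'' Ghat) :
    ∀ (π : Equiv.Perm (Fin m)) (Gprev Gt : Γ),
      (∑ Ghat, q (π • Gprev) (π • Gt) Ghat * phat (π • Gt) Ghat)
        = ∑ Ghat, q Gprev Gt Ghat * phat Gt Ghat := by
  intro π Gprev Gt
  rw [← Equiv.sum_comp (MulAction.toPerm π)
    (fun Ghat => q (π • Gprev) (π • Gt) Ghat * phat (π • Gt) Ghat)]
  refine Finset.sum_congr rfl fun Ghat _ => ?_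
  simp only [MulAction.toPerm_apply]
  rw [hq π Gprev Gt Ghat, hphat π Gt Ghat]
end

section
/- Combining the previous facts: if the initial noise distribution is the (permutation-invariant) all-mask Dirac, and the denoising network is permutation equivariant, then the generated distribution satisfies P_i(V, A) = P_{πᵀi}(πᵀV, πᵀAπ) for every permutation matrix π, i.e., the model's output law on (node features, adjacency) is equivariant to node reordering. -/
/-- Theorem 3.1 (Equivariance for graph generation).  The reverse diffusion
starts from the all-MASK graph (a permutation-invariant Dirac) and repeatedly
applies reverse kernels (built from an equivariant denoising network and
forward posterior, here abstracted by the equivariance hypothesis `hK`) that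
may depend on a position-index vector.  Then the generated law satisfies
P_i(V, A) = P_{πᵀi}(πᵀV, πᵀAπ) for every permutation π. -/
theorem generation_equivariant (m T : ℕ) (Vt Et : Type*)
    [Fintype Vt] [Fintype Et] [DecidableEq Vt] [DecidableEq Et]
    (maskV : Vt) (maskE : Et)
    (K : ℕ → (Fin m → ℕ) → ((Fin m → Vt) × (Fin m → Fin m → Et)) →
      ((Fin m → Vt) × (Fin m → Fin m → Et)) → ℝ)
    (hK : ∀ (k : ℕ) (pos : Fin m → ℕ) (π : Equiv.Perm (Fin m)) G G',
      K k (pos ∘ π) (fun a => G.1 (π a), fun a b => G.2 (π a) (π b))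
          (fun a => G'.1 (π a), fun a b => G'.2 (π a) (π b)) = K k pos G G')
    (μ : ℕ → (Fin m → ℕ) → ((Fin m → Vt) × (Fin m → Fin m → Et)) → ℝ)
    (hμ0 : ∀ pos G, μ 0 pos G =
      if G = (fun _ => maskV, fun _ _ => maskE) then 1 else 0)
    (hμs : ∀ (k : ℕ) (pos : Fin m → ℕ) G', μ (k + 1) pos G' =
      ∑ G, μ k pos G * K k pos G G') :
    ∀ (π : Equiv.Perm (Fin m)) (pos : Fin m → ℕ)
      (G : (Fin m → Vt) × (Fin m → Fin m → Et)),
      μ T (pos ∘ π) (fun a => G.1 (π a), fun a b => G.2 (π a) (π b))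
        = μ T pos G := by
  induction T with
  | zero =>
    intro π pos G
    rw [hμ0, hμ0]
    congr 1
    simp only [eq_iff_iff, Prod.ext_iff, funext_iff]
    constructor
    · rintro ⟨h1, h2⟩
      exact ⟨fun a => by simpa using h1 (π.symm a),
             fun a b => by simpa using h2 (π.symm a) (π.symm b)⟩
    · rintro ⟨h1, h2⟩
      exact ⟨fun a => h1 (π a), fun a b => h2 (π a) (π b)⟩
  | succ k ih =>
    intro π pos G
    rw [hμs, hμs]
    let e : ((Fin m → Vt) × (Fin m → Fin m → Et)) ≃
        ((Fin m → Vt) × (Fin m → Fin m → Et)) :=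
      { toFun := fun H => (fun a => H.1 (π a), fun a b => H.2 (π a) (π b))
        invFun := fun H => (fun a => H.1 (π.symm a), fun a b => H.2 (π.symm a) (π.symm b))
        left_inv := fun H => by simp
        right_inv := fun H => by simp }
    rw [← Equiv.sum_comp e (fun H => μ k (pos ∘ π) H * K k (pos ∘ π) H
      (fun a => G.1 (π a), fun a b => G.2 (π a) (π b)))]
    refine Finset.sum_congr rfl fun H _ => ?_
    show μ k (pos ∘ π) (fun a => H.1 (π a), fun a b => H.2 (π a) (π b)) *
        K k (pos ∘ π) (fun a => H.1 (π a), fun a b => H.2 (π a) (π b))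
          (fun a => G.1 (π a), fun a b => G.2 (π a) (π b)) = _
    rw [ih π pos H, hK k pos π H G]
end
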